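/- Let E ∈ ℝ^{n₁×n₂} be α-sparse and let U ∈ ℝ^{n₁×r} be μ-incoherent. Then for every nonnegative integer p and every row index j, ‖e_jᵀ(EEᵀ)ᵖU‖₂ ≤ √(μ²r/n₁)·(α·√(n₁n₂)·‖E‖_∞)^{2p}. -/

import Mathlib

open Matrix Real

/-- Entrywise supremum norm `‖E‖_∞ = max_{i,j} |E i j|`. -/
noncomputable def entrySup {m n : ℕ} (E : Matrix (Fin m) (Fin n) ℝ) : ℝ :=
  ⨆ i, ⨆ j, |E i j|

/-- A matrix is `α`-sparse: at most `α·m` nonzero entries per column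
and at most `α·n` nonzero entries per row. -/
def IsAlphaSparse {m n : ℕ} (α : ℝ) (E : Matrix (Fin m) (Fin n) ℝ) : Prop :=
  (∀ j, ((Finset.univ.filter fun i => E i j ≠ 0).card : ℝ) ≤ α * m) ∧
  (∀ i, ((Finset.univ.filter fun j => E i j ≠ 0).card : ℝ) ≤ α * n)

/-- Spectral (operator) norm of a matrix, via the Euclidean spaces. -/
noncomputable def matSpectralNorm {m n : ℕ} (A : Matrix (Fin m) (Fin n) ℝ) : ℝ :=
  ‖LinearMap.toContinuousLinearMap (Matrix.toEuclideanLin A)‖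

/-- Frobenius norm. -/
noncomputable def frobNorm {m n : ℕ} (A : Matrix (Fin m) (Fin n) ℝ) : ℝ :=
  Real.sqrt (∑ i, ∑ j, (A i j) ^ 2)

/-- Euclidean norm of the `i`-th row of a matrix. -/
noncomputable def rowNorm {m n : ℕ} (A : Matrix (Fin m) (Fin n) ℝ) (i : Fin m) : ℝ :=
  Real.sqrt (∑ j, (A i j) ^ 2)

/-- `μ`-incoherence: every row has Euclidean norm at most `μ√r/√m`. -/
def IsIncoherent {m r : ℕ} (μ : ℝ) (U : Matrix (Fin m) (Fin r) ℝ) : Prop :=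
  ∀ i, rowNorm U i ≤ μ * Real.sqrt r / Real.sqrt m

/-!
The row-sum norm `‖A‖ = maxᵢ ∑ₖ |A i k|` is submultiplicative. By `α`-sparsity every row sum of
`E` is at most `α n₂ ‖E‖_∞` and every column sum at most `α n₁ ‖E‖_∞`, so
`‖(E Eᵀ)ᵖ‖ ≤ (α² n₁ n₂ ‖E‖_∞²)ᵖ`. Row `j` of `A U` is `∑ₗ A j l • U l`, a combination of rows of
`U` of norm at most `μ√r/√n₁` each, so its norm is at most `‖A‖ μ√r/√n₁`.
-/
attribute [local instance] Matrix.linftyOpNormedAddCommGroup Matrix.linftyOpNormedRing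

lemma sum_abs_le_card_support_mul {ι : Type*} [Fintype ι] (v : ι → ℝ) {M : ℝ}
    (hv : ∀ k, |v k| ≤ M) :
    ∑ k, |v k| ≤ (Finset.univ.filter fun k => v k ≠ 0).card * M := by
  classical
  calc ∑ k, |v k| = ∑ k ∈ Finset.univ.filter fun k => v k ≠ 0, |v k| :=
        (Finset.sum_filter_of_ne fun _ _ hk => abs_ne_zero.mp hk).symm
    _ ≤ _ := by simpa using Finset.sum_le_card_nsmul _ _ M fun k _ => hv k

section LinftyOp

variable {m n : Type*} [Fintype m] [Fintype n]

lemma sum_abs_le_linfty_opNorm (A : Matrix m n ℝ) (i : m) : ∑ k, |A i k| ≤ ‖A‖ :=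
  calc ∑ k, |A i k| = ‖WithLp.toLp 1 (A i)‖ := by simp [PiLp.norm_eq_of_L1]
    _ ≤ ‖A‖ := norm_le_pi_norm (fun i => WithLp.toLp 1 (A i)) i

lemma linfty_opNorm_le_of_sum_abs_le [Nonempty m] {A : Matrix m n ℝ} {c : ℝ}
    (h : ∀ i, ∑ k, |A i k| ≤ c) : ‖A‖ ≤ c := by
  refine (pi_norm_le_iff_of_nonempty (fun i => WithLp.toLp 1 (A i))).2 fun i => ?_
  simpa [PiLp.norm_eq_of_L1] using h i

end LinftyOp

lemma entrySup_nonneg {m n : ℕ} (E : Matrix (Fin m) (Fin n) ℝ) : 0 ≤ entrySup E :=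
  Real.iSup_nonneg fun _ => Real.iSup_nonneg fun _ => abs_nonneg _

lemma abs_le_entrySup {m n : ℕ} (E : Matrix (Fin m) (Fin n) ℝ) (i : Fin m) (k : Fin n) :
    |E i k| ≤ entrySup E :=
  (le_ciSup (Set.finite_range _).bddAbove k).trans
    (le_ciSup (f := fun i => ⨆ k, |E i k|) (Set.finite_range _).bddAbove i)

namespace IsAlphaSparse

variable {m n : ℕ} {α : ℝ} {E : Matrix (Fin m) (Fin n) ℝ}

lemma sum_abs_row_le (hE : IsAlphaSparse α E) (i : Fin m) :
    ∑ k, |E i k| ≤ α * n * entrySup E :=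
  (sum_abs_le_card_support_mul _ (abs_le_entrySup E i)).trans
    (mul_le_mul_of_nonneg_right (hE.2 i) (entrySup_nonneg E))

lemma sum_abs_col_le (hE : IsAlphaSparse α E) (k : Fin n) :
    ∑ i, |E i k| ≤ α * m * entrySup E :=
  (sum_abs_le_card_support_mul (fun i => E i k) (abs_le_entrySup E · k)).trans
    (mul_le_mul_of_nonneg_right (hE.1 k) (entrySup_nonneg E))

lemma linfty_opNorm_mul_transpose_le [Nonempty (Fin m)] (hE : IsAlphaSparse α E) :
    ‖E * Eᵀ‖ ≤ (α * Real.sqrt (m * n) * entrySup E) ^ 2 := by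
  rcases isEmpty_or_nonempty (Fin n) with _ | _
  · have : E * Eᵀ = 0 := by ext; simp [Matrix.mul_apply]
    rw [this, norm_zero]
    positivity
  have hrow : ‖E‖ ≤ α * n * entrySup E := linfty_opNorm_le_of_sum_abs_le hE.sum_abs_row_le
  have hcol : ‖Eᵀ‖ ≤ α * m * entrySup E := linfty_opNorm_le_of_sum_abs_le hE.sum_abs_col_le
  calc ‖E * Eᵀ‖ ≤ ‖E‖ * ‖Eᵀ‖ := Matrix.linfty_opNorm_mul E Eᵀ
    _ ≤ (α * n * entrySup E) * (α * m * entrySup E) :=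
      mul_le_mul hrow hcol (norm_nonneg _) ((norm_nonneg _).trans hrow)
    _ = (α * Real.sqrt (m * n) * entrySup E) ^ 2 := by
      rw [mul_pow, mul_pow, Real.sq_sqrt (by positivity)]; ring

end IsAlphaSparse

lemma rowNorm_eq_norm_toLp {m n : ℕ} (A : Matrix (Fin m) (Fin n) ℝ) (i : Fin m) :
    rowNorm A i = ‖WithLp.toLp 2 (A i)‖ := by
  simp [rowNorm, EuclideanSpace.norm_eq]

lemma rowNorm_mul_le {l m n : ℕ} (A : Matrix (Fin l) (Fin m) ℝ) (U : Matrix (Fin m) (Fin n) ℝ)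
    (j : Fin l) : rowNorm (A * U) j ≤ ∑ k, |A j k| * rowNorm U k := by
  have hrow : WithLp.toLp 2 ((A * U) j) = ∑ k, A j k • WithLp.toLp 2 (U k) := by
    rw [Matrix.mul_apply_eq_vecMul, Matrix.vecMul_eq_sum, WithLp.toLp_sum]
    simp only [WithLp.toLp_smul]
  rw [rowNorm_eq_norm_toLp, hrow]
  refine (norm_sum_le _ _).trans_eq ?_
  simp only [norm_smul, Real.norm_eq_abs, rowNorm_eq_norm_toLp]

lemma rowNorm_mul_le_of_rowNorm_le {l m n : ℕ} (A : Matrix (Fin l) (Fin m) ℝ)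
    (U : Matrix (Fin m) (Fin n) ℝ) {c : ℝ} (hc : 0 ≤ c) (hU : ∀ k, rowNorm U k ≤ c)
    (j : Fin l) : rowNorm (A * U) j ≤ ‖A‖ * c :=
  calc rowNorm (A * U) j ≤ ∑ k, |A j k| * rowNorm U k := rowNorm_mul_le A U j
    _ ≤ (∑ k, |A j k|) * c := by
      rw [Finset.sum_mul]
      exact Finset.sum_le_sum fun k _ => mul_le_mul_of_nonneg_left (hU k) (abs_nonneg _)
    _ ≤ ‖A‖ * c := mul_le_mul_of_nonneg_right (sum_abs_le_linfty_opNorm A j) hc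

lemma mul_sqrt_div_sqrt_le_sqrt (μ : ℝ) {b : ℝ} (hb : 0 ≤ b) (c : ℝ) :
    μ * Real.sqrt b / Real.sqrt c ≤ Real.sqrt (μ ^ 2 * b / c) := by
  rw [Real.sqrt_div (by positivity), Real.sqrt_mul (sq_nonneg μ), Real.sqrt_sq_eq_abs]
  gcongr
  exact le_abs_self μ

theorem row_norm_pow_incoherent_bound {n₁ n₂ r : ℕ} (α μ : ℝ)
    (E : Matrix (Fin n₁) (Fin n₂) ℝ) (U : Matrix (Fin n₁) (Fin r) ℝ)
    (hE : IsAlphaSparse α E) (hU : IsIncoherent μ U) (p : ℕ) (j : Fin n₁) :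
    rowNorm ((E * Eᵀ) ^ p * U) j ≤
      Real.sqrt (μ ^ 2 * r / n₁) * (α * Real.sqrt (n₁ * n₂) * entrySup E) ^ (2 * p) := by
  have : Nonempty (Fin n₁) := ⟨j⟩
  have hpow : ‖(E * Eᵀ) ^ p‖ ≤ (α * Real.sqrt (n₁ * n₂) * entrySup E) ^ (2 * p) := by
    rw [pow_mul]
    exact (norm_pow_le _ p).trans
      (pow_le_pow_left₀ (norm_nonneg _) hE.linfty_opNorm_mul_transpose_le p)
  have hU' : ∀ k, rowNorm U k ≤ Real.sqrt (μ ^ 2 * r / n₁) := fun k =>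
    (hU k).trans (mul_sqrt_div_sqrt_le_sqrt μ r.cast_nonneg _)
  calc rowNorm ((E * Eᵀ) ^ p * U) j ≤ ‖(E * Eᵀ) ^ p‖ * Real.sqrt (μ ^ 2 * r / n₁) :=
        rowNorm_mul_le_of_rowNorm_le _ U (Real.sqrt_nonneg _) hU' j
    _ ≤ _ := by
      rw [mul_comm]
      gcongr
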